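/- Let n ≥ 3 and let I be a finite set of diagonals of the convex (n+3)-gon G_{n+3} such that the non-crossing graph G(I) has exactly two connected components I₁ and I₂, and |I| ≥ q(n)+1. Then |I₁| = 1 or |I₂| = 1. -/

import Mathlib

/-- A diagonal of the convex `N`-gon with vertices labelled `1, …, N` in cyclic order:
a pair `(i, j)` with `1 ≤ i`, `i + 2 ≤ j ≤ N`, excluding the edge `(1, N)`. -/
def IsDiag (N : ℕ) (d : ℕ × ℕ) : Prop :=
  1 ≤ d.1 ∧ d.1 + 2 ≤ d.2 ∧ d.2 ≤ N ∧ ¬(d.1 = 1 ∧ d.2 = N)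

instance (N : ℕ) (d : ℕ × ℕ) : Decidable (IsDiag N d) := by
  unfold IsDiag; infer_instance

/-- Two diagonals of a convex polygon cross (intersect at an interior point). -/
def Crosses (d e : ℕ × ℕ) : Prop :=
  (d.1 < e.1 ∧ e.1 < d.2 ∧ d.2 < e.2) ∨ (e.1 < d.1 ∧ d.1 < e.2 ∧ e.2 < d.2)

instance (d e : ℕ × ℕ) : Decidable (Crosses d e) := by
  unfold Crosses; infer_instance

/-- The finite set of all diagonals of the convex `N`-gon. -/
def Diags (N : ℕ) : Finset (ℕ × ℕ) :=
  (Finset.range (N + 1) ×ˢ Finset.range (N + 1)).filter (IsDiag N)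
/-- The non-crossing graph `G(I)` on a finite set `I` of diagonals: two distinct
diagonals are adjacent iff they do not cross. Its connected components correspond to
the connected components of the union `P_I` of the facets of the associahedron `Asⁿ`
indexed by `I`. -/
def ncGraph (I : Finset (ℕ × ℕ)) : SimpleGraph {x // x ∈ I} where
  Adj d e := d ≠ e ∧ ¬ Crosses d.1 e.1
  symm := by
    constructor
    rintro d e ⟨h1, h2⟩
    exact ⟨h1.symm, fun h => h2 (Or.symm h)⟩
  loopless := ⟨fun d h => h.1 rfl⟩

/-- `G(I)` has exactly two connected components, `I₁` and `I₂`: they partition `I`,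
are nonempty, and two diagonals of `I` are joined by a path in the non-crossing graph
iff they lie in the same part. -/
def TwoComponents (I I₁ I₂ : Finset (ℕ × ℕ)) : Prop :=
  I₁ ∪ I₂ = I ∧ Disjoint I₁ I₂ ∧ I₁.Nonempty ∧ I₂.Nonempty ∧
    ∀ (d : ℕ × ℕ) (hd : d ∈ I) (e : ℕ × ℕ) (he : e ∈ I),
      (ncGraph I).Reachable ⟨d, hd⟩ ⟨e, he⟩ ↔
        (d ∈ I₁ ∧ e ∈ I₁) ∨ (d ∈ I₂ ∧ e ∈ I₂)

/-- `q(n) = n(n+2)/4` for even `n` and `q(n) = (n+1)²/4` for odd `n`. -/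
def q (n : ℕ) : ℕ := if Even n then n * (n + 2) / 4 else (n + 1) ^ 2 / 4

/-!
If both components had at least two elements, every diagonal of `I₁` would cross every
diagonal of `I₂` (non-crossing diagonals are adjacent in `G(I)`). Fix `a ∈ I₁`: each
`b ∈ I₂` crosses `a`, so it is determined by its endpoint inside `a` and its endpoint
outside `a`; hence `4 |I₂| ≤ s²`, where `s` is the number of endpoints of diagonals of
`I₂`, and likewise `4 |I₁| ≤ t²`. Crossing diagonals share no endpoint, so
`s + t ≤ n + 3`, and since `s, t ≥ 3` this gives `4 |I| ≤ s² + t² ≤ (n + 1)² + 2`,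
i.e. `|I| ≤ ⌊(n + 1)² / 4⌋ = q(n)`.
-/

open Finset

namespace Crosses

variable {a b : ℕ × ℕ}

lemma symm (h : Crosses a b) : Crosses b a := Or.symm h

lemma fst_lt_snd_right (h : Crosses a b) : b.1 < b.2 := by
  unfold Crosses at h; omega

lemma endpoints_ne (h : Crosses a b) :
    a.1 ≠ b.1 ∧ a.1 ≠ b.2 ∧ a.2 ≠ b.1 ∧ a.2 ≠ b.2 := by
  unfold Crosses at h; omega

end Crosses

lemma TwoComponents.crosses {I I₁ I₂ : Finset (ℕ × ℕ)} (h : TwoComponents I I₁ I₂)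
    {a b : ℕ × ℕ} (ha : a ∈ I₁) (hb : b ∈ I₂) : Crosses a b := by
  obtain ⟨hunion, hdisj, -, -, hreach⟩ := h
  have haI : a ∈ I := hunion ▸ mem_union_left _ ha
  have hbI : b ∈ I := hunion ▸ mem_union_right _ hb
  by_contra hnc
  have hne : a ≠ b := fun hab => disjoint_left.mp hdisj ha (hab ▸ hb)
  have hadj : (ncGraph I).Adj ⟨a, haI⟩ ⟨b, hbI⟩ := ⟨fun h => hne (congrArg Subtype.val h), hnc⟩
  rcases (hreach a haI b hbI).mp hadj.reachable with ⟨-, hb₁⟩ | ⟨ha₂, -⟩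
  · exact disjoint_left.mp hdisj hb₁ hb
  · exact disjoint_left.mp hdisj ha ha₂

def endpoints (S : Finset (ℕ × ℕ)) : Finset ℕ := S.image Prod.fst ∪ S.image Prod.snd

lemma mem_endpoints {S : Finset (ℕ × ℕ)} {v : ℕ} :
    v ∈ endpoints S ↔ ∃ d ∈ S, d.1 = v ∨ d.2 = v := by
  simp only [endpoints, mem_union, mem_image]
  constructor
  · rintro (⟨d, hd, rfl⟩ | ⟨d, hd, rfl⟩)
    exacts [⟨d, hd, .inl rfl⟩, ⟨d, hd, .inr rfl⟩]
  · rintro ⟨d, hd, rfl | rfl⟩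
    exacts [.inl ⟨d, hd, rfl⟩, .inr ⟨d, hd, rfl⟩]

lemma endpoints_subset_Icc {N : ℕ} {S : Finset (ℕ × ℕ)} (hS : ∀ d ∈ S, IsDiag N d) :
    endpoints S ⊆ Icc 1 N := by
  intro v hv
  obtain ⟨d, hd, hdv⟩ := mem_endpoints.mp hv
  have := hS d hd
  unfold IsDiag at this
  rw [mem_Icc]
  omega

lemma disjoint_endpoints_of_forall_crosses {S T : Finset (ℕ × ℕ)}
    (h : ∀ a ∈ S, ∀ b ∈ T, Crosses a b) : Disjoint (endpoints S) (endpoints T) := by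
  rw [disjoint_left]
  intro v hvS hvT
  obtain ⟨a, ha, hav⟩ := mem_endpoints.mp hvS
  obtain ⟨b, hb, hbv⟩ := mem_endpoints.mp hvT
  have := (h a ha b hb).endpoints_ne
  omega

/-- Diagonals crossing a fixed diagonal `a` are determined by their endpoint inside `a`
and their endpoint outside `a`. -/
lemma card_le_mul_of_forall_crosses (a : ℕ × ℕ) {S : Finset (ℕ × ℕ)}
    (hS : ∀ b ∈ S, Crosses a b) :
    #S ≤ #{v ∈ endpoints S | a.1 < v ∧ v < a.2} *
      #{v ∈ endpoints S | ¬(a.1 < v ∧ v < a.2)} := by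
  let orient : ℕ × ℕ → ℕ × ℕ := fun b => if a.1 < b.1 ∧ b.1 < a.2 then b else b.swap
  have hmaps : ∀ b ∈ S, orient b ∈ {v ∈ endpoints S | a.1 < v ∧ v < a.2} ×ˢ
      {v ∈ endpoints S | ¬(a.1 < v ∧ v < a.2)} := by
    intro b hb
    have hab := hS b hb
    have h1 : b.1 ∈ endpoints S := mem_endpoints.mpr ⟨b, hb, .inl rfl⟩
    have h2 : b.2 ∈ endpoints S := mem_endpoints.mpr ⟨b, hb, .inr rfl⟩
    unfold Crosses at hab
    simp only [orient, mem_product, mem_filter]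
    split_ifs
    · exact ⟨⟨h1, by omega⟩, h2, by omega⟩
    · rw [Prod.fst_swap, Prod.snd_swap]
      exact ⟨⟨h2, by omega⟩, h1, by omega⟩
  have hinj : Set.InjOn orient S := by
    intro b hb b' hb' hbb'
    have := (hS b hb).fst_lt_snd_right
    have := (hS b' hb').fst_lt_snd_right
    simp only [orient] at hbb'
    split_ifs at hbb' <;> simp only [Prod.ext_iff, Prod.fst_swap, Prod.snd_swap] at hbb' <;>
      exact Prod.ext (by omega) (by omega)
  exact (card_le_card_of_injOn orient hmaps hinj).trans_eq (card_product _ _)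

lemma four_mul_card_le_sq_card_endpoints (a : ℕ × ℕ) {S : Finset (ℕ × ℕ)}
    (hS : ∀ b ∈ S, Crosses a b) : 4 * #S ≤ #(endpoints S) ^ 2 := by
  have hmul := card_le_mul_of_forall_crosses a hS
  rw [← card_filter_add_card_filter_not (fun v => a.1 < v ∧ v < a.2)]
  set x := #{v ∈ endpoints S | a.1 < v ∧ v < a.2}
  set y := #{v ∈ endpoints S | ¬(a.1 < v ∧ v < a.2)}
  nlinarith [sq_nonneg ((x : ℤ) - y)]

lemma sq_add_sq_le {s t m : ℕ} (hs : 3 ≤ s) (ht : 3 ≤ t) (hst : s + t ≤ m + 2) :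
    s ^ 2 + t ^ 2 ≤ m ^ 2 + 2 := by
  -- `(s + t - 2)² + 2 - s² - t² = 2 ((s - 2) (t - 2) - 1)`
  have hprod : (1 : ℤ) ≤ (s - 2) * (t - 2) := one_le_mul_of_one_le_of_one_le (by omega) (by omega)
  have hm : (s + t - 2 : ℤ) ^ 2 ≤ (m : ℤ) ^ 2 := pow_le_pow_left₀ (by omega) (by omega) 2
  zify
  linarith

lemma le_q_of_four_mul_le {n k : ℕ} (hk : 4 * k ≤ (n + 1) ^ 2 + 2) : k ≤ q n := by
  unfold q
  split_ifs with h
  · obtain ⟨m, rfl⟩ := h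
    rw [show (m + m) * (m + m + 2) = 4 * (m * m + m) by ring]
    rw [show (m + m + 1) ^ 2 = 4 * (m * m + m) + 1 by ring] at hk
    omega
  · obtain ⟨m, rfl⟩ := Nat.not_even_iff_odd.mp h
    rw [show (2 * m + 1 + 1) ^ 2 = 4 * (m + 1) ^ 2 by ring] at hk ⊢
    omega

theorem singleton_component_general (n : ℕ) (I I₁ I₂ : Finset (ℕ × ℕ))
    (hdiag : ∀ d ∈ I, IsDiag (n + 3) d) (h2 : TwoComponents I I₁ I₂)
    (hI : q n + 1 ≤ I.card) :
    I₁.card = 1 ∨ I₂.card = 1 := by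
  by_contra! hcard
  have hcross : ∀ a ∈ I₁, ∀ b ∈ I₂, Crosses a b := fun _ ha _ hb => h2.crosses ha hb
  obtain ⟨hunion, hdisj, ⟨a, ha⟩, ⟨b, hb⟩, -⟩ := h2
  have hI₁ : 2 ≤ #I₁ := by have := card_pos.mpr ⟨a, ha⟩; omega
  have hI₂ : 2 ≤ #I₂ := by have := card_pos.mpr ⟨b, hb⟩; omega
  have h₁ := four_mul_card_le_sq_card_endpoints b fun a ha => (hcross a ha b hb).symm
  have h₂ := four_mul_card_le_sq_card_endpoints a (hcross a ha)
  have hends : #(endpoints I₁) + #(endpoints I₂) ≤ n + 3 := by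
    rw [← card_union_of_disjoint (disjoint_endpoints_of_forall_crosses hcross)]
    simpa using card_le_card (union_subset
      (endpoints_subset_Icc fun d hd => hdiag d (hunion ▸ mem_union_left _ hd))
      (endpoints_subset_Icc fun d hd => hdiag d (hunion ▸ mem_union_right _ hd)))
  have ht : 3 ≤ #(endpoints I₁) := by nlinarith
  have hs : 3 ≤ #(endpoints I₂) := by nlinarith
  have hsq := sq_add_sq_le ht hs (m := n + 1) (by omega)
  rw [← hunion, card_union_of_disjoint hdisj] at hI
  have := le_q_of_four_mul_le (n := n) (k := #I₁ + #I₂) (by omega)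
  omega

/-- Lemma 2.22: if `G(I)` has exactly two connected components `I₁`, `I₂` and
`|I| ≥ q(n)+1`, then one of the components is a singleton. -/
theorem singleton_component (n : ℕ) (hn : 3 ≤ n) (I I₁ I₂ : Finset (ℕ × ℕ))
    (hdiag : ∀ d ∈ I, IsDiag (n + 3) d) (h2 : TwoComponents I I₁ I₂)
    (hI : q n + 1 ≤ I.card) :
    I₁.card = 1 ∨ I₂.card = 1 :=
  singleton_component_general n I I₁ I₂ hdiag h2 hI
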